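/- In the group G_ncdiff of series g = leaf + Σ_{n≥2} g_{(n)} over the free operad on reduced plane trees, the compositional inverse of the corolla series f_c = S_0 + Σ_{n≥1} S_n S_0^{n+1} is g_c = Σ_{t ∈ PT} (-1)^{i(t)} S^t, where i(t) is the number of internal vertices of t. -/

import Mathlib

noncomputable section

/-- Reduced plane trees (Schröder trees): every internal vertex has at least two children. -/
inductive STree where
  | leaf : STree
  | node (a b : STree) (l : List STree) : STree

mutual
  /-- Number of internal vertices `i(t)` of a reduced plane tree. -/
  def internalT : STree → ℕ
    | .leaf => 0
    | .node a b l => 1 + internalT a + internalT b + internalL l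
  def internalL : List STree → ℕ
    | [] => 0
    | t :: ts => internalT t + internalL ts
end

/-- The coefficients of the series `g_c = Σ_{t ∈ PT} (-1)^{i(t)} S^t`. -/
def gcCoeff (t : STree) : ℤ := (-1) ^ (internalT t)

lemma prod_map_gcCoeff (l : List STree) : (l.map gcCoeff).prod = (-1 : ℤ) ^ internalL l := by
  induction l with
  | nil => simp [internalL]
  | cons t ts ih => simp [internalL, gcCoeff, ih, pow_add]

lemma gcCoeff_node (a b : STree) (l : List STree) :
    gcCoeff (.node a b l) = -(gcCoeff a * gcCoeff b * (l.map gcCoeff).prod) := by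
  simp only [gcCoeff, internalT, prod_map_gcCoeff, pow_add, pow_one]
  ring

/-- **Inversion of the corolla series in `G_ncdiff`.** The series
`g_c = Σ_{t ∈ PT} (-1)^{i(t)} S^t` is the compositional inverse of the corolla series
`f_c = S_0 + Σ_{n≥1} S_n S_0^{n+1}`: equivalently, `g_c` satisfies
`S_0 = g_c + Σ_{n≥1} S_n g_c^{n+1}`, which reads on coefficients as
`g_c(leaf) = 1` and, for every tree `t = ∧(t_1,…,t_m)` with `m ≥ 2`,
`g_c(t) + g_c(t_1) ⋯ g_c(t_m) = 0`. -/
theorem corolla_series_inverse :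
    gcCoeff .leaf = 1 ∧
    ∀ (a b : STree) (l : List STree),
      gcCoeff (.node a b l) + gcCoeff a * gcCoeff b * (l.map gcCoeff).prod = 0 :=
  ⟨rfl, fun a b l => by rw [gcCoeff_node, neg_add_cancel]⟩
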